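/- arXiv:1903.03874 — 3 statements merged into one kernel-verified Lean document; each statement's English description precedes it below -/
import Mathlib

section
/- Let R be a commutative ℚ-algebra, let g ∈ R[[p]] be a formal power series with constant term 1, let f ∈ R[[p]], and fix w, k ∈ ℚ. Define h(p) := Σ_{n≥0} (coefficient of p^n in g(p)^{w−kn}·f(p))·p^n ∈ R[[p]]. Then, substituting p = z·g(z)^k (a power series in z with zero constant term, so composition of formal power series is defined), one has h(z·g(z)^k) = g(z)^w·f(z) / (1 + k·z·g′(z)/g(z)), where the denominator 1 + k·z·g′(z)/g(z) has constant term 1 and hence is a unit in R[[z]]. -/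
open PowerSeries

noncomputable section
namespace Formal

variable {R : Type*} [CommRing R] [Algebra ℚ R]

/-- `log u := -∑_{k≥1} (1-u)^k / k`, the usual power series logarithm. The coefficientwise
truncation used here is valid whenever `constantCoeff u = 1`, since then `(1-u)^k` has
order `≥ k`. -/
def log (u : PowerSeries R) : PowerSeries R :=
  PowerSeries.mk fun N => ∑ k ∈ Finset.Icc 1 N, (-(k : ℚ)⁻¹) • coeff N ((1 - u) ^ k)

/-- `exp v := ∑_{k≥0} v^k / k!`; the coefficientwise truncation is valid whenever
`constantCoeff v = 0`, since then `v^k` has order `≥ k`. -/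
def expS (v : PowerSeries R) : PowerSeries R :=
  PowerSeries.mk fun N => ∑ k ∈ Finset.range (N + 1), ((k.factorial : ℚ)⁻¹) • coeff N (v ^ k)

/-- Rational power `u^α := exp (α · log u)`, well defined for `u` with constant term `1`. -/
def rpow (u : PowerSeries R) (α : ℚ) : PowerSeries R := expS (α • log u)

/-- Composition `h ∘ s = ∑_n (coeff n h) · s^n`; the coefficientwise truncation is valid
whenever `constantCoeff s = 0`, since then `s^n` has order `≥ n`. -/
def comp (h s : PowerSeries R) : PowerSeries R :=
  PowerSeries.mk fun N => ∑ k ∈ Finset.range (N + 1), coeff k h * coeff N (s ^ k)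

/-!
The rational powers `rpow g α = exp (α · log g)` satisfy `(g^α)' = α · (log g)' · g^α`, by the
chain rule for substitution together with `exp' = exp` and `(log (1 + X))' = 1 / (1 + X)`. A
solution of this linear equation with constant term `1` is unique, so `α ↦ g^α` is additive. For
`u = g^k` this gives `(X u)' = D u` and `g^(w - k n) = g^w u^(-n)`, so the `n`-th coefficient of
`h` is the `n`-th coefficient of `E (X u)' u^(-(n+1))`, where `E = g^w f / D`.

The theorem is then the Lagrange–Bürmann formula `E = ∑ₙ [Xⁿ](E (X u)' u^(-(n+1))) (X u)ⁿ`: the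
functionals `E ↦ [Xⁿ](E (X u)' u^(-(n+1)))` are dual to the triangular basis `(X u)ᵐ`. Indeed for
`m < n` the pairing reduces to `[Xʳ]((X u)' u^(-(r+1)))` with `r = n - m ≥ 1`, and `r` times this
series is `r u^(-r) - X (u^(-r))'`, whose `r`-th coefficient vanishes.
-/

section

variable {S : Type*} [CommRing S] {u : S⟦X⟧}

theorem coeff_pow_of_lt {s : S⟦X⟧} (hs : constantCoeff s = 0) {n m : ℕ} (h : n < m) :
    coeff n (s ^ m) = 0 :=
  X_pow_dvd_iff.1 (pow_dvd_pow_of_dvd (X_dvd_iff.2 hs) m) n h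

theorem coeff_X_mul_derivative (f : S⟦X⟧) (n : ℕ) :
    coeff n (X * d⁄dX S f) = n • coeff n f := by
  cases n with
  | zero => simp
  | succ n => rw [coeff_succ_X_mul, coeff_derivative, nsmul_eq_mul, mul_comm, Nat.cast_succ]

theorem one_add_X_mul_mk_neg_one_pow [Algebra ℚ S] :
    (1 + X) * mk (fun n => algebraMap ℚ S ((-1) ^ n)) = 1 := by
  ext n
  cases n with
  | zero => simp
  | succ n => simp [add_mul, coeff_succ_X_mul, pow_succ]

theorem derivative_inverse (hu : IsUnit u) :
    d⁄dX S (Ring.inverse u) = -(Ring.inverse u ^ 2 * d⁄dX S u) := by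
  obtain ⟨u, rfl⟩ := hu
  rw [Ring.inverse_unit, derivative_inv, neg_mul]

theorem eq_of_derivative_eq_mul [IsAddTorsionFree S] {a y z : S⟦X⟧}
    (hy : d⁄dX S y = a * y) (hz : d⁄dX S z = a * z) (hzu : IsUnit z)
    (h0 : constantCoeff y = constantCoeff z) : y = z := by
  have hzz : z * Ring.inverse z = 1 := Ring.mul_inverse_cancel z hzu
  have hconst : y * Ring.inverse z = 1 := by
    refine derivative.ext ?_ ?_
    · rw [Derivation.leibniz, derivative_inverse hzu, hy, hz, Derivation.map_one_eq_zero,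
        smul_eq_mul, smul_eq_mul]
      linear_combination (-(y * Ring.inverse z * a)) * hzz
    · rw [map_mul, h0, ← map_mul, hzz]
  calc y = y * Ring.inverse z * z := by rw [mul_assoc, Ring.inverse_mul_cancel z hzu, mul_one]
    _ = z := by rw [hconst, one_mul]

theorem comp_eq_subst {s : S⟦X⟧} (hs : constantCoeff s = 0) (h : S⟦X⟧) :
    comp h s = h.subst s := by
  ext N
  rw [comp, coeff_mk, coeff_subst' (HasSubst.of_constantCoeff_zero' hs),
    finsum_eq_sum_of_support_subset (s := Finset.range (N + 1))]
  · simp only [smul_eq_mul]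
  · intro d hd
    by_contra hdN
    exact hd (by simp only [coeff_pow_of_lt hs (by simpa using hdN : N < d), smul_zero])

def lagrangeCoeff (u : S⟦X⟧) (n : ℕ) : S⟦X⟧ →ₗ[S] S :=
  (coeff n).comp (LinearMap.mulRight S (d⁄dX S (X * u) * Ring.inverse u ^ (n + 1)))

theorem lagrangeCoeff_apply (n : ℕ) (E : S⟦X⟧) :
    lagrangeCoeff u n E = coeff n (E * (d⁄dX S (X * u) * Ring.inverse u ^ (n + 1))) :=
  rfl

theorem coeff_derivative_X_mul_mul_inverse_pow [IsAddTorsionFree S] (hu : IsUnit u) {r : ℕ}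
    (hr : r ≠ 0) :
    coeff r (d⁄dX S (X * u) * Ring.inverse u ^ (r + 1)) = 0 := by
  set v := Ring.inverse u
  have huv : u * v = 1 := Ring.mul_inverse_cancel u hu
  obtain ⟨s, rfl⟩ := Nat.exists_eq_succ_of_ne_zero hr
  have key : (s + 1) • (d⁄dX S (X * u) * v ^ (s + 1 + 1))
      = (s + 1) • v ^ (s + 1) - X * d⁄dX S (v ^ (s + 1)) := by
    rw [derivative_pow, derivative_inverse hu, Derivation.leibniz, derivative_X, smul_eq_mul,
      smul_eq_mul]
    push_cast
    linear_combination ((s + 1 : S⟦X⟧) * v ^ (s + 1)) * huv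
  have hc := congrArg (coeff (s + 1)) key
  rw [map_nsmul, map_sub, map_nsmul, coeff_X_mul_derivative, sub_self] at hc
  exact (smul_eq_zero.1 hc).resolve_left (Nat.succ_ne_zero s)

theorem lagrangeCoeff_X_mul_pow_of_lt [IsAddTorsionFree S] (hu : IsUnit u) {n m : ℕ}
    (h : n < m) : lagrangeCoeff u m ((X * u) ^ n) = 0 := by
  obtain ⟨r, rfl⟩ := Nat.exists_eq_add_of_lt h
  have hsplit : (X * u) ^ n * (d⁄dX S (X * u) * Ring.inverse u ^ (n + r + 1 + 1))
      = X ^ n * (d⁄dX S (X * u) * Ring.inverse u ^ (r + 1 + 1)) := by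
    have huv : (u * Ring.inverse u) ^ n = 1 := by rw [Ring.mul_inverse_cancel u hu, one_pow]
    rw [show n + r + 1 + 1 = n + (r + 1 + 1) by ring, pow_add]
    linear_combination X ^ n * d⁄dX S (X * u) * Ring.inverse u ^ (r + 1 + 1) * huv
  rw [lagrangeCoeff_apply, hsplit, show n + r + 1 = (r + 1) + n by ring, coeff_X_pow_mul,
    coeff_derivative_X_mul_mul_inverse_pow hu (Nat.succ_ne_zero r)]

theorem lagrangeCoeff_X_pow_mul (hu : IsUnit u) (m : ℕ) (F : S⟦X⟧) :
    lagrangeCoeff u m (X ^ m * F) = constantCoeff F * constantCoeff (Ring.inverse u) ^ m := by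
  have huv : constantCoeff u * constantCoeff (Ring.inverse u) = 1 := by
    rw [← map_mul, Ring.mul_inverse_cancel u hu, map_one]
  rw [lagrangeCoeff_apply, mul_assoc, coeff_X_pow_mul', if_pos le_rfl, Nat.sub_self,
    coeff_zero_eq_constantCoeff_apply, Derivation.leibniz, derivative_X]
  simp only [map_mul, map_add, map_pow, smul_eq_mul, constantCoeff_X, mul_one, zero_mul, zero_add]
  linear_combination constantCoeff F * constantCoeff (Ring.inverse u) ^ m * huv

theorem X_pow_dvd_sub_sum_lagrangeCoeff [IsAddTorsionFree S] (hu : IsUnit u) (E : S⟦X⟧)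
    (m : ℕ) : X ^ m ∣ E - ∑ n ∈ Finset.range m, lagrangeCoeff u n E • (X * u) ^ n := by
  induction m with
  | zero => simp
  | succ m ih =>
    obtain ⟨F, hF⟩ := ih
    have hE : E = X ^ m * F + ∑ n ∈ Finset.range m, lagrangeCoeff u n E • (X * u) ^ n := by
      rw [← hF, sub_add_cancel]
    have hcoeff : lagrangeCoeff u m E = constantCoeff F * constantCoeff (Ring.inverse u) ^ m := by
      conv_lhs => rw [hE]
      rw [map_add, map_sum, lagrangeCoeff_X_pow_mul hu, add_eq_left]
      refine Finset.sum_eq_zero fun n hn => ?_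
      rw [map_smul, lagrangeCoeff_X_mul_pow_of_lt hu (Finset.mem_range.1 hn), smul_zero]
    have hlow : constantCoeff (F - C (lagrangeCoeff u m E) * u ^ m) = 0 := by
      rw [map_sub, map_mul, constantCoeff_C, hcoeff, map_pow, mul_assoc, ← mul_pow,
        ← map_mul, Ring.inverse_mul_cancel u hu, map_one, one_pow, mul_one, sub_self]
    obtain ⟨G, hG⟩ := X_dvd_iff.2 hlow
    refine ⟨G, ?_⟩
    rw [Finset.sum_range_succ, ← sub_sub, hF, pow_succ, mul_assoc, ← hG, smul_eq_C_mul, mul_pow]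
    ring

theorem comp_lagrangeCoeff [IsAddTorsionFree S] (hu : IsUnit u) (E : S⟦X⟧) :
    comp (mk fun n => lagrangeCoeff u n E) (X * u) = E := by
  ext N
  have h := X_pow_dvd_iff.1 (X_pow_dvd_sub_sum_lagrangeCoeff hu E (N + 1)) N (Nat.lt_succ_self N)
  rw [map_sub, sub_eq_zero, map_sum] at h
  simp only [comp, coeff_mk, h, coeff_smul, smul_eq_mul]

end

attribute [local instance] IsAddTorsionFree.of_module_rat

theorem expS_eq_subst {v : R⟦X⟧} (hv : constantCoeff v = 0) : expS v = (exp R).subst v := by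
  rw [← comp_eq_subst hv]
  ext N
  simp [expS, comp, coeff_exp, Algebra.smul_def]

theorem log_eq_subst {u : R⟦X⟧} (hu : constantCoeff u = 1) :
    Formal.log u = (PowerSeries.log R).subst (u - 1) := by
  rw [← comp_eq_subst (by simp [hu])]
  ext N
  simp only [Formal.log, comp, coeff_mk, coeff_log]
  have hsub : Finset.Icc 1 N ⊆ Finset.range (N + 1) := fun k hk => by
    simp only [Finset.mem_Icc, Finset.mem_range] at hk ⊢; omega
  rw [← Finset.sum_subset hsub fun k hk hk' => ?_]
  · refine Finset.sum_congr rfl fun k hk => ?_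
    have hk0 : k ≠ 0 := by simp only [Finset.mem_Icc] at hk; omega
    have hsign : ((-1 : ℚ) ^ (k + 1) / k) * (-1) ^ k = -(k : ℚ)⁻¹ := by
      have hsq : ((-1 : ℚ) ^ k) ^ 2 = 1 := by rw [← pow_mul, mul_comm, pow_mul]; norm_num
      linear_combination (-(k : ℚ)⁻¹) * hsq
    have hpow : (u - 1) ^ k = C ((-1 : R) ^ k) * (1 - u) ^ k := by
      rw [map_pow, map_neg, map_one, ← mul_pow]; ring
    rw [if_neg hk0, hpow, coeff_C_mul, ← mul_assoc,
      show (-1 : R) ^ k = algebraMap ℚ R ((-1) ^ k) by simp, ← map_mul, hsign, Algebra.smul_def]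
  · have hk0 : k = 0 := by simp only [Finset.mem_Icc, Finset.mem_range] at hk hk'; omega
    rw [if_pos hk0, zero_mul]

theorem derivative_expS {v : R⟦X⟧} (hv : constantCoeff v = 0) :
    d⁄dX R (expS v) = d⁄dX R v * expS v := by
  rw [expS_eq_subst hv, derivative_subst (HasSubst.of_constantCoeff_zero' hv), derivative_exp,
    mul_comm]

theorem derivative_log {u : R⟦X⟧} (hu : constantCoeff u = 1) :
    d⁄dX R (Formal.log u) = d⁄dX R u * Ring.inverse u := by
  have hs : HasSubst (u - 1) := HasSubst.of_constantCoeff_zero' (by simp [hu])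
  have hinv := congrArg (subst (u - 1)) (one_add_X_mul_mk_neg_one_pow (S := R))
  rw [← coe_substAlgHom hs, map_mul, map_add, map_one, substAlgHom_X, add_sub_cancel,
    coe_substAlgHom] at hinv
  have hunit : IsUnit u := isUnit_iff_constantCoeff.2 (by rw [hu]; exact isUnit_one)
  rw [log_eq_subst hu, derivative_subst hs, deriv_log, map_sub, Derivation.map_one_eq_zero,
    sub_zero, mul_comm, ← Ring.inverse_mul_cancel_left u (subst _ _) hunit, hinv, mul_one]

theorem constantCoeff_rpow (g : R⟦X⟧) (α : ℚ) : constantCoeff (rpow g α) = 1 := by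
  rw [rpow, expS, ← coeff_zero_eq_constantCoeff_apply, coeff_mk]
  simp

theorem isUnit_rpow (g : R⟦X⟧) (α : ℚ) : IsUnit (rpow g α) :=
  isUnit_iff_constantCoeff.2 (by rw [constantCoeff_rpow]; exact isUnit_one)

theorem derivative_rpow (g : R⟦X⟧) (α : ℚ) :
    d⁄dX R (rpow g α) = α • d⁄dX R (Formal.log g) * rpow g α := by
  have hlog : constantCoeff (Formal.log g) = 0 := by
    rw [Formal.log, ← coeff_zero_eq_constantCoeff_apply, coeff_mk]
    simp
  rw [rpow, derivative_expS (by simp [hlog]), Derivation.map_smul_of_tower]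

theorem rpow_zero (g : R⟦X⟧) : rpow g 0 = 1 :=
  eq_of_derivative_eq_mul (a := 0) (by rw [derivative_rpow, zero_smul])
    (by rw [Derivation.map_one_eq_zero, mul_one]) isUnit_one (by rw [constantCoeff_rpow, map_one])

theorem rpow_add (g : R⟦X⟧) (α β : ℚ) : rpow g (α + β) = rpow g α * rpow g β := by
  refine eq_of_derivative_eq_mul (derivative_rpow g (α + β)) ?_
    ((isUnit_rpow g α).mul (isUnit_rpow g β)) (by simp only [map_mul, constantCoeff_rpow, one_mul])
  rw [Derivation.leibniz, derivative_rpow, derivative_rpow, smul_eq_mul, smul_eq_mul, add_smul]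
  ring

theorem rpow_mul_natCast (g : R⟦X⟧) (α : ℚ) (n : ℕ) : rpow g (α * n) = rpow g α ^ n := by
  induction n with
  | zero => simpa using rpow_zero g
  | succ n ih => rw [Nat.cast_succ, mul_add_one, rpow_add, ih, pow_succ]

theorem rpow_sub_mul_natCast (g : R⟦X⟧) (α β : ℚ) (n : ℕ) :
    rpow g (α - β * n) = rpow g α * Ring.inverse (rpow g β) ^ n := by
  have h := rpow_add g (α - β * n) (β * n)
  rw [sub_add_cancel, rpow_mul_natCast] at h
  rw [h, mul_assoc, ← mul_pow, Ring.mul_inverse_cancel _ (isUnit_rpow g β), one_pow, mul_one]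

/-- Let `R` be a commutative `ℚ`-algebra, `g ∈ R[[p]]` with constant term `1`,
`f ∈ R[[p]]`, and `w, k ∈ ℚ`. Set `h(p) := ∑_{n≥0} (coeff of p^n in g^{w-kn}·f) p^n`.
Substituting `p = z·g(z)^k` (a power series with zero constant term) one has
`h(z·g(z)^k) = g(z)^w·f(z) / (1 + k·z·g′(z)/g(z))`, where the denominator has constant
term `1` and hence is a unit (its inverse being `Ring.inverse`). -/
theorem statement0 (g f : PowerSeries R) (hg : constantCoeff g = 1) (w k : ℚ) :
    let h : PowerSeries R := PowerSeries.mk fun n => coeff n (rpow g (w - k * n) * f)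
    let D : PowerSeries R := 1 + k • (X * d⁄dX R g * Ring.inverse g)
    constantCoeff D = 1 ∧
      comp h (X * rpow g k) = rpow g w * f * Ring.inverse D := by
  intro h D
  have hD : constantCoeff D = 1 := by simp [D]
  refine ⟨hD, ?_⟩
  set u := rpow g k
  have hDu : d⁄dX R (X * u) = D * u := by
    rw [Derivation.leibniz, derivative_X, smul_eq_mul, smul_eq_mul, derivative_rpow,
      derivative_log hg]
    simp only [D, Algebra.smul_def]
    ring
  have hDD : Ring.inverse D * D = 1 :=
    Ring.inverse_mul_cancel D (isUnit_iff_constantCoeff.2 (by rw [hD]; exact isUnit_one))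
  have huu : u * Ring.inverse u = 1 := Ring.mul_inverse_cancel u (isUnit_rpow g k)
  have hh : h = mk fun n => lagrangeCoeff u n (rpow g w * f * Ring.inverse D) := by
    ext n
    rw [coeff_mk, coeff_mk, lagrangeCoeff_apply, hDu, rpow_sub_mul_natCast]
    congr 1
    linear_combination (-(rpow g w * Ring.inverse u ^ n * f * (u * Ring.inverse u))) * hDD
      - rpow g w * Ring.inverse u ^ n * f * huu
  rw [hh, comp_lagrangeCoeff (isUnit_rpow g k)]

end Formal
end
end

section
/- Let R be a commutative ℚ-algebra, let g ∈ R[[p]] be a formal power series with constant term 1 and let f ∈ R[[p]]. Define h(p) := Σ_{n≥0} (coefficient of p^n in g(p)^{−n}·f(p))·p^n ∈ R[[p]]. Then, substituting p = z·g(z) (a power series in z with zero constant term, so composition of formal power series is defined), one has h(z·g(z)) = f(z) / (1 + z·g′(z)/g(z)), where 1 + z·g′(z)/g(z) has constant term 1 and hence is a unit in R[[z]]. -/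
/-!
Write `G = g⁻¹` and `D = 1 + X g' G`. The map `Ψ f = ∑ₙ [Xⁿ](Gⁿ f) Xⁿ` is injective, because
`[Xⁿ](Gⁿ f) = G(0)ⁿ [Xⁿ] f` as soon as the coefficients of `f` below `n` vanish. The series
`(X g)ᵏ D` satisfy `[Xⁿ](Gⁿ (X g)ᵏ D) = δₙₖ`: for `n = k + m` this is `[Xᵐ](Gᵐ D)`, and for `m > 0`
the identity `m Gᵐ D = m Gᵐ - X (Gᵐ)'` shows it vanishes, since `[Xᵐ](X p') = m [Xᵐ] p`.
Hence `Ψ (h(X g) D) = h = Ψ f`, so `h(X g) D = f`.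
-/

open PowerSeries

noncomputable section
namespace PowerSeries

variable {R : Type*} [CommRing R]

theorem coeff_mul_eq_of_trunc_eq (a : R⟦X⟧) {b b' : R⟦X⟧} {n : ℕ}
    (h : trunc (n + 1) b = trunc (n + 1) b') : coeff n (a * b) = coeff n (a * b') := by
  rw [coeff_mul_eq_coeff_trunc_mul_trunc _ _ n.lt_succ_self, h,
    ← coeff_mul_eq_coeff_trunc_mul_trunc _ _ n.lt_succ_self]

theorem derivative_pow_of_mul_eq_one {g G : R⟦X⟧} (hG : g * G = 1) (m : ℕ) :
    d⁄dX R (G ^ m) = -(m * d⁄dX R g * G ^ (m + 1)) := by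
  have hGd : d⁄dX R G = -(d⁄dX R g * G ^ 2) := by
    have h0 : d⁄dX R (g * G) = 0 := by rw [hG, Derivation.map_one_eq_zero]
    rw [Derivation.leibniz, smul_eq_mul, smul_eq_mul] at h0
    linear_combination G * h0 - d⁄dX R G * hG
  rcases m with _ | m
  · simp
  · rw [derivative_pow, hGd, Nat.add_sub_cancel]
    ring

theorem coeff_X_mul_derivative (p : R⟦X⟧) (m : ℕ) : coeff m (X * d⁄dX R p) = m * coeff m p := by
  rcases m with _ | m
  · simp
  · rw [coeff_succ_X_mul, coeff_derivative, mul_comm]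
    push_cast; ring

theorem isUnit_constantCoeff_of_mul_eq_one {g G : R⟦X⟧} (hG : g * G = 1) :
    IsUnit (constantCoeff G) :=
  IsUnit.of_mul_eq_one_right (constantCoeff g) (by rw [← map_mul, hG, map_one])

theorem eq_zero_of_coeff_pow_mul_eq_zero {G f : R⟦X⟧} (hG : IsUnit (constantCoeff G))
    (hf : ∀ n, coeff n (G ^ n * f) = 0) : f = 0 := by
  ext n
  induction n using Nat.strong_induction_on with
  | _ n ih =>
    obtain ⟨w, rfl⟩ : X ^ n ∣ f := X_pow_dvd_iff.mpr ih
    have hn := hf n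
    rw [mul_left_comm, coeff_X_pow_mul', if_pos le_rfl, Nat.sub_self,
      coeff_zero_eq_constantCoeff_apply, map_mul, map_pow] at hn
    rw [coeff_X_pow_mul', if_pos le_rfl, Nat.sub_self, coeff_zero_eq_constantCoeff_apply,
      map_zero]
    exact (hG.pow n).mul_right_eq_zero.mp hn

end PowerSeries

namespace Formal

variable {R : Type*} [CommRing R]

theorem trunc_comp {s : R⟦X⟧} (hs : constantCoeff s = 0) (h : R⟦X⟧) (N : ℕ) :
    trunc (N + 1) (comp h s) = trunc (N + 1) (∑ k ∈ Finset.range (N + 1), coeff k h • s ^ k) := by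
  ext n
  simp only [coeff_trunc]
  split_ifs with hn
  · have hvan : ∀ k, n < k → coeff n (s ^ k) = 0 := fun k hk =>
      X_pow_dvd_iff.mp (by simpa [mul_pow] using pow_dvd_pow_of_dvd (X_dvd_iff.mpr hs) k) n hk
    rw [comp, coeff_mk, map_sum]
    simp only [coeff_smul, smul_eq_mul]
    refine Finset.sum_subset (Finset.range_subset_range.mpr (by omega)) fun k hk hkn => ?_
    rw [hvan k (by simp at hk hkn; omega), mul_zero]
  · rfl

theorem coeff_mul_comp (a : R⟦X⟧) {s : R⟦X⟧} (hs : constantCoeff s = 0) (h : R⟦X⟧) (n : ℕ) :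
    coeff n (a * comp h s) = ∑ k ∈ Finset.range (n + 1), coeff k h * coeff n (a * s ^ k) := by
  rw [coeff_mul_eq_of_trunc_eq a (trunc_comp hs h n), Finset.mul_sum, map_sum]
  simp only [mul_smul_comm, coeff_smul, smul_eq_mul]

variable [Algebra ℚ R]

theorem coeff_pow_mul_one_add_X_mul_logDeriv {g G : R⟦X⟧} (hG : g * G = 1) {m : ℕ} (hm : m ≠ 0) :
    coeff m (G ^ m * (1 + X * d⁄dX R g * G)) = 0 := by
  have hmR : IsUnit (m : R) := by
    simpa using
      (isUnit_iff_ne_zero.mpr (Nat.cast_ne_zero.mpr hm : (m : ℚ) ≠ 0)).map (algebraMap ℚ R)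
  have key : m • (G ^ m * (1 + X * d⁄dX R g * G)) = m • G ^ m - X * d⁄dX R (G ^ m) := by
    rw [derivative_pow_of_mul_eq_one hG]
    ring
  replace key := congrArg (coeff m) key
  rw [map_nsmul, map_sub, map_nsmul, coeff_X_mul_derivative, nsmul_eq_mul, nsmul_eq_mul,
    sub_self] at key
  exact hmR.mul_right_eq_zero.mp key

theorem coeff_pow_mul_one_add_X_mul_logDeriv_mul_pow {g G : R⟦X⟧} (hG : g * G = 1) (n k : ℕ) :
    coeff n (G ^ n * (1 + X * d⁄dX R g * G) * (X * g) ^ k) = if n = k then 1 else 0 := by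
  rcases lt_or_ge n k with hnk | hkn
  · rw [if_neg hnk.ne]
    exact X_pow_dvd_iff.mp ⟨G ^ n * (1 + X * d⁄dX R g * G) * g ^ k, by ring⟩ n hnk
  obtain ⟨m, rfl⟩ := Nat.exists_eq_add_of_le hkn
  have hsplit : G ^ (k + m) * (1 + X * d⁄dX R g * G) * (X * g) ^ k
      = X ^ k * ((g * G) ^ k * (G ^ m * (1 + X * d⁄dX R g * G))) := by ring
  rw [hsplit, hG, one_pow, one_mul, add_comm, coeff_X_pow_mul]
  rcases eq_or_ne m 0 with rfl | hm
  · simp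
  · rw [coeff_pow_mul_one_add_X_mul_logDeriv hG hm, if_neg (by omega)]

theorem comp_X_mul_mul_one_add_X_mul_logDeriv {g G : R⟦X⟧} (hG : g * G = 1) (f : R⟦X⟧) :
    comp (mk fun n => coeff n (G ^ n * f)) (X * g) * (1 + X * d⁄dX R g * G) = f := by
  have hXg : constantCoeff (X * g) = 0 := by simp
  refine (sub_eq_zero.mp <| eq_zero_of_coeff_pow_mul_eq_zero
    (isUnit_constantCoeff_of_mul_eq_one hG) fun n => ?_).symm
  rw [mul_sub, map_sub, sub_eq_zero, mul_comm (comp _ _), ← mul_assoc, coeff_mul_comp _ hXg]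
  simp [coeff_pow_mul_one_add_X_mul_logDeriv_mul_pow hG]

/-- Let `R` be a commutative ring (e.g. a `ℚ`-algebra), `g ∈ R[[p]]` with
constant term `1` (hence a unit, with inverse `Ring.inverse g`, so that
`g^{-n} = (Ring.inverse g)^n`), and `f ∈ R[[p]]`. Set
`h(p) := ∑_{n≥0} (coeff of p^n in g^{-n}·f) p^n`. Substituting `p = z·g(z)` one has
`h(z·g(z)) = f(z) / (1 + z·g′(z)/g(z))`, where the denominator has constant term `1`
and hence is a unit (with inverse `Ring.inverse`). -/
theorem statement1 (g f : PowerSeries R) (hg : constantCoeff g = 1) :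
    let h : PowerSeries R := PowerSeries.mk fun n => coeff n ((Ring.inverse g) ^ n * f)
    let D : PowerSeries R := 1 + X * d⁄dX R g * Ring.inverse g
    constantCoeff D = 1 ∧
      comp h (X * g) = f * Ring.inverse D := by
  intro h D
  have hD : constantCoeff D = 1 := by simp [D]
  have hG : g * Ring.inverse g = 1 :=
    Ring.mul_inverse_cancel g (isUnit_iff_constantCoeff.mpr (hg ▸ isUnit_one))
  refine ⟨hD, ?_⟩
  rw [← comp_X_mul_mul_one_add_X_mul_logDeriv hG f, mul_assoc,
    Ring.mul_inverse_cancel D (isUnit_iff_constantCoeff.mpr (hD ▸ isUnit_one)), mul_one]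

end Formal
end
end

section
/- Let V be a ℚ-vector space equipped with a symmetric bilinear form (·,·), and write α² := (α,α). Fix rational numbers s ≠ 0, r and c₂, and elements c₁, ℓ ∈ V. Set M := ℓ − (r/s)·c₁, and define c₂(v) := M²/2 + 2r + (M,c₁)/s + (r/s)·(c₁²/2 − c₂), vd(c) := 2s·c₂ − (s−1)·c₁² − 2(s²−1), and vd(v) := 2r·c₂(v) − (r−1)·M² − 2(r²−1). Then vd(v) = ℓ² + 2 − (r²/s²)·(vd(c) − 2). -/
section SymmetricBilinForm

variable {R V : Type*} [CommRing R] [AddCommGroup V] [Module R V]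
  (B : LinearMap.BilinForm R V)

theorem LinearMap.BilinForm.apply_sub_smul_left (x y : V) (t : R) :
    B (x - t • y) y = B x y - t * B y y := by
  simp only [map_sub, map_smul, LinearMap.sub_apply, LinearMap.smul_apply, smul_eq_mul]

theorem LinearMap.BilinForm.apply_sub_smul_self (hB : ∀ x y : V, B x y = B y x)
    (x y : V) (t : R) :
    B (x - t • y) (x - t • y) = B x x - 2 * t * B x y + t ^ 2 * B y y := by
  simp only [map_sub, map_smul, LinearMap.sub_apply, LinearMap.smul_apply, smul_eq_mul,
    hB y x]
  ring

end SymmetricBilinForm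

/-- Let `V` be a `ℚ`-vector space with a symmetric bilinear form `(·,·)`,
write `α² := (α,α)`. Fix rationals `s ≠ 0`, `r`, `c₂` and `c₁, ℓ ∈ V`.
Set `M := ℓ − (r/s)·c₁`, `c₂(v) := M²/2 + 2r + (M,c₁)/s + (r/s)(c₁²/2 − c₂)`,
`vd(c) := 2s c₂ − (s−1) c₁² − 2(s²−1)` and `vd(v) := 2r c₂(v) − (r−1) M² − 2(r²−1)`.
Then `vd(v) = ℓ² + 2 − (r²/s²)(vd(c) − 2)`. -/
theorem statement12 {V : Type*} [AddCommGroup V] [Module ℚ V]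
    (B : LinearMap.BilinForm ℚ V) (hB : ∀ x y : V, B x y = B y x)
    (s r c₂ : ℚ) (hs : s ≠ 0) (c₁ ℓ : V) :
    let M : V := ℓ - (r / s) • c₁
    let c₂v : ℚ := B M M / 2 + 2 * r + B M c₁ / s + (r / s) * (B c₁ c₁ / 2 - c₂)
    let vdc : ℚ := 2 * s * c₂ - (s - 1) * B c₁ c₁ - 2 * (s ^ 2 - 1)
    let vdv : ℚ := 2 * r * c₂v - (r - 1) * B M M - 2 * (r ^ 2 - 1)
    vdv = B ℓ ℓ + 2 - (r ^ 2 / s ^ 2) * (vdc - 2) := by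
  intro M c₂v vdc vdv
  have hMM : B M M = B ℓ ℓ - 2 * (r / s) * B ℓ c₁ + (r / s) ^ 2 * B c₁ c₁ :=
    B.apply_sub_smul_self hB ℓ c₁ (r / s)
  have hMc₁ : B M c₁ = B ℓ c₁ - (r / s) * B c₁ c₁ := B.apply_sub_smul_left ℓ c₁ (r / s)
  -- the mixed terms (ℓ, c₁) from 2r·c₂(v) and from −(r−1)·M² cancel exactly
  simp only [vdv, c₂v, vdc, hMM, hMc₁]
  field_simp
  ring
end
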